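/- Let B(k) := 36k² + 3k(4k+1)² and a(k) := k·(3/5 - k)²·(1 - 3k)·e^{-5}. For k = 0.038895 and Δ = 7,327,700,972, the inequality (a(k)·Δ - 2)² / (2·B(k)·Δ) ≥ 1 + ln(2(Δ⁴ + 2)) holds. -/

import Mathlib

/-!
Both transcendental quantities are pinned down by truncated Taylor series: `exp (-5)` from
below through `exp 5 = exp (5/8) ^ 8`, and the logarithm from above through a lower bound on
`exp 91.552857814 = exp (91.552857814/128) ^ 128`. The remaining inequality between rationals
holds with a margin of about `10⁻⁸`, and the left-hand side only grows with `a(k)`.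
-/

open Real

namespace DeltaMin

noncomputable def B (k : ℝ) : ℝ := 36 * k ^ 2 + 3 * k * (4 * k + 1) ^ 2

noncomputable def a (k : ℝ) : ℝ := k * (3 / 5 - k) ^ 2 * (1 - 3 * k) * exp (-5)

theorem exp_eq_exp_div_pow (x : ℝ) {n : ℕ} (hn : n ≠ 0) : exp x = exp (x / n) ^ n := by
  rw [← exp_nat_mul, mul_div_cancel₀ x (Nat.cast_ne_zero.mpr hn)]

theorem exp_le_pow_of_exp_div_le {x u : ℝ} {n : ℕ} (hn : n ≠ 0) (h : exp (x / n) ≤ u) :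
    exp x ≤ u ^ n := by
  rw [exp_eq_exp_div_pow x hn]
  exact pow_le_pow_left₀ (exp_pos _).le h n

theorem pow_le_exp_of_le_exp_div {x l : ℝ} {n : ℕ} (hn : n ≠ 0) (hl : 0 ≤ l)
    (h : l ≤ exp (x / n)) : l ^ n ≤ exp x := by
  rw [exp_eq_exp_div_pow x hn]
  exact pow_le_pow_left₀ hl h n

theorem inv_le_exp_neg_five :
    ((1868245957432222407 / 1000000000000000000 : ℝ) ^ 8)⁻¹ ≤ exp (-5) := by
  have h : exp (5 / (8 : ℕ)) ≤ 1868245957432222407 / 1000000000000000000 := by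
    refine (exp_bound' (n := 18) (by norm_num) (by norm_num) (by norm_num)).trans ?_
    norm_num [Finset.sum_range_succ, Nat.factorial]
  rw [exp_neg]
  exact inv_anti₀ (exp_pos 5) (exp_le_pow_of_exp_div_le (by norm_num) h)

theorem log_two_mul_pow_four_add_two_le :
    log (2 * ((7327700972 : ℝ) ^ 4 + 2)) ≤ 91.552857814 := by
  have h : (204471149575488607 / 100000000000000000 : ℝ) ≤ exp (91.552857814 / (128 : ℕ)) := by
    refine le_trans ?_ (sum_le_exp_of_nonneg (by norm_num) 16)
    norm_num [Finset.sum_range_succ, Nat.factorial]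
  rw [log_le_iff_le_exp (by positivity)]
  refine le_trans ?_ (pow_le_exp_of_le_exp_div (by norm_num) (by norm_num) h)
  norm_num

theorem one_add_le_sq_sub_div {a₀ a L L₀ b Δ : ℝ} (hb : 0 < b) (hΔ : 0 < Δ)
    (ha₀ : 2 ≤ a₀ * Δ) (ha : a₀ ≤ a) (hL : L ≤ L₀)
    (h : (1 + L₀) * (2 * b * Δ) ≤ (a₀ * Δ - 2) ^ 2) :
    1 + L ≤ (a * Δ - 2) ^ 2 / (2 * b * Δ) := by
  have hden : 0 < 2 * b * Δ := by positivity
  rw [le_div_iff₀ hden]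
  calc (1 + L) * (2 * b * Δ) ≤ (1 + L₀) * (2 * b * Δ) := by gcongr
    _ ≤ (a₀ * Δ - 2) ^ 2 := h
    _ ≤ (a * Δ - 2) ^ 2 := by
      apply pow_le_pow_left₀ (by linarith)
      gcongr

end DeltaMin

open DeltaMin

theorem stmt_10 :
    ((0.038895 * (3/5 - 0.038895)^2 * (1 - 3*0.038895) * Real.exp (-5))
        * 7327700972 - 2)^2
      / (2 * (36*(0.038895:ℝ)^2 + 3*0.038895*(4*0.038895+1)^2) * 7327700972)
    ≥ 1 + Real.log (2 * ((7327700972:ℝ)^4 + 2)) := by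
  show (a 0.038895 * 7327700972 - 2) ^ 2 / (2 * B 0.038895 * 7327700972) ≥ _
  set a₀ : ℝ := 0.038895 * (3 / 5 - 0.038895) ^ 2 * (1 - 3 * 0.038895) *
    ((1868245957432222407 / 1000000000000000000 : ℝ) ^ 8)⁻¹
  have ha : a₀ ≤ a 0.038895 :=
    mul_le_mul_of_nonneg_left inv_le_exp_neg_five (by norm_num)
  have hrat : (1 + 91.552857814) * (2 * B 0.038895 * 7327700972) ≤ (a₀ * 7327700972 - 2) ^ 2 := by
    norm_num [a₀, B]
  exact one_add_le_sq_sub_div (by norm_num [B]) (by norm_num) (by norm_num [a₀]) ha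
    log_two_mul_pow_four_add_two_le hrat
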